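/- Let n ≥ 1, let m > n be an integer, let R > 0, and let f ∈ L¹(ℝ^n) be supported in the closed ball B̄(0,R). Then the grand maximal function satisfies M_m f(x) ≤ R^{-n} ‖f‖_{L¹(ℝ^n)} for every x with |x| > 2R. -/
import Mathlib


open MeasureTheory Metric Filter

noncomputable section

/-- Euclidean space `ℝⁿ`. -/
abbrev E (n : ℕ) := EuclideanSpace ℝ (Fin n)

/-- The class `A_m`: Schwartz functions `φ` with
`sup_{|β| ≤ m} sup_x (1+|x|)^m |D^β φ(x)| ≤ 1`. -/
def MemAm (n m : ℕ) (φ : SchwartzMap (E n) ℝ) : Prop :=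
  ∀ k ≤ m, ∀ x : E n, (1 + ‖x‖) ^ m * ‖iteratedFDeriv ℝ k (φ : E n → ℝ) x‖ ≤ 1

/-- The dilated convolution `φ_t * f (x) = ∫ t⁻ⁿ φ((x-y)/t) f(y) dy`. -/
def dilConv (n : ℕ) (φ : SchwartzMap (E n) ℝ) (t : ℝ) (f : E n → ℝ) (x : E n) : ℝ :=
  ∫ y, (t ^ n)⁻¹ * φ (t⁻¹ • (x - y)) * f y

/-- The grand maximal function `M_m f(x) = sup_{φ ∈ A_m} sup_{t > 0} |φ_t * f(x)|`. -/
def grandMaximal (n m : ℕ) (f : E n → ℝ) (x : E n) : ℝ :=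
  sSup { c : ℝ | ∃ φ : SchwartzMap (E n) ℝ, MemAm n m φ ∧
    ∃ t : ℝ, 0 < t ∧ c = |dilConv n φ t f x| }

/-- **Theorem (decay of the grand maximal function outside the double ball).**
Let `n ≥ 1`, `m > n`, `R > 0`, and `f ∈ L¹(ℝⁿ)` supported in `B̄(0,R)`.  Then
`M_m f(x) ≤ R⁻ⁿ ‖f‖_{L¹}` for every `x` with `|x| > 2R`. -/
theorem grand_maximal_decay (n m : ℕ) (hn : 1 ≤ n) (hm : n < m)
    (R : ℝ) (hR : 0 < R) (f : E n → ℝ) (hf : Integrable f)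
    (hsupp : ∀ y, y ∉ closedBall (0 : E n) R → f y = 0)
    (x : E n) (hx : 2 * R < ‖x‖) :
    grandMaximal n m f x ≤ (R ^ n)⁻¹ * ∫ y, |f y| := by
  have hRn : (0 : ℝ) < R ^ n := pow_pos hR n
  have hrhs : 0 ≤ (R ^ n)⁻¹ * ∫ y, |f y| :=
    mul_nonneg (inv_nonneg.mpr hRn.le) (integral_nonneg fun y => abs_nonneg _)
  apply Real.sSup_le _ hrhs
  rintro c ⟨φ, hφ, t, ht, rfl⟩
  have key : ∀ y, ‖(t ^ n)⁻¹ * φ (t⁻¹ • (x - y)) * f y‖ ≤ (R ^ n)⁻¹ * |f y| := by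
    intro y
    by_cases hy : y ∈ closedBall (0 : E n) R
    · have hyR : ‖y‖ ≤ R := by simpa using hy
      have hs : R < ‖x - y‖ := by
        have := norm_sub_norm_le x y
        linarith
      set u := t⁻¹ • (x - y) with hu_def
      have hu : ‖u‖ = t⁻¹ * ‖x - y‖ := by
        rw [hu_def, norm_smul, Real.norm_eq_abs, abs_of_pos (inv_pos.mpr ht)]
      have hφ0 := hφ 0 (Nat.zero_le m) u
      rw [norm_iteratedFDeriv_zero] at hφ0
      have h1u : (0 : ℝ) < 1 + ‖u‖ := by positivity
      have hmpos : (0 : ℝ) < (1 + ‖u‖) ^ m := pow_pos h1u m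
      have hφle : ‖φ u‖ ≤ ((1 + ‖u‖) ^ m)⁻¹ := by
        have h := mul_le_mul_of_nonneg_left hφ0 (inv_nonneg.mpr hmpos.le)
        rwa [← mul_assoc, inv_mul_cancel₀ hmpos.ne', one_mul, mul_one] at h
      have e1 : t * (1 + ‖u‖) = t + ‖x - y‖ := by
        rw [hu]; field_simp
      have e3 : R ^ n ≤ (t + ‖x - y‖) ^ n :=
        pow_le_pow_left₀ hR.le (by linarith) n
      have e4 : (1 + ‖u‖) ^ n ≤ (1 + ‖u‖) ^ m :=
        pow_le_pow_right₀ (by linarith [norm_nonneg u]) hm.le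
      have h2 : R ^ n ≤ t ^ n * (1 + ‖u‖) ^ m := by
        have e2 : (t + ‖x - y‖) ^ n = t ^ n * (1 + ‖u‖) ^ n := by
          rw [← e1, mul_pow]
        have e5 : t ^ n * (1 + ‖u‖) ^ n ≤ t ^ n * (1 + ‖u‖) ^ m :=
          mul_le_mul_of_nonneg_left e4 (pow_pos ht n).le
        linarith [e3, e2 ▸ e3]
      have hbound : (t ^ n)⁻¹ * ‖φ u‖ ≤ (R ^ n)⁻¹ := by
        calc (t ^ n)⁻¹ * ‖φ u‖ ≤ (t ^ n)⁻¹ * ((1 + ‖u‖) ^ m)⁻¹ :=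
              mul_le_mul_of_nonneg_left hφle (by positivity)
          _ = (t ^ n * (1 + ‖u‖) ^ m)⁻¹ := (mul_inv _ _).symm
          _ ≤ (R ^ n)⁻¹ := by
              apply inv_anti₀ hRn h2
      calc ‖(t ^ n)⁻¹ * φ u * f y‖ = (t ^ n)⁻¹ * ‖φ u‖ * |f y| := by
            rw [norm_mul, norm_mul, Real.norm_eq_abs, Real.norm_eq_abs, Real.norm_eq_abs,
              abs_of_pos (inv_pos.mpr (pow_pos ht n))]
        _ ≤ (R ^ n)⁻¹ * |f y| :=
            mul_le_mul_of_nonneg_right hbound (abs_nonneg _)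
    · simp [hsupp y hy, hrhs]
  calc |dilConv n φ t f x| ≤ ∫ y, (R ^ n)⁻¹ * |f y| := by
        rw [← Real.norm_eq_abs, dilConv]
        exact norm_integral_le_of_norm_le (hf.abs.const_mul _)
          (Filter.Eventually.of_forall key)
    _ = (R ^ n)⁻¹ * ∫ y, |f y| := integral_const_mul _ _
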